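/- Strong convexity lower bound for the population loss at Q*: let d be any probability measure on S × A, let w : S × A → [0, ∞) be bounded measurable, and let q : S × A → [0, V_max] be measurable with s' ↦ sup_a q(s', a) measurable; assume Q*(s, a) ∈ [0, V_max] for all (s, a). Let d^D_w denote the finite measure with density w with respect to d^D, and let P_{π*_e} d^D_w be its image under one state-action transition step (s' ~ P(·|s, a), a' ~ π*_e(·|s')). Then L(d, q, w) − L(d, Q*, w) ≥ 0.5·⟨d, q² − (Q*)²⟩ + γ·⟨P_{π*_e} d^D_w, q − Q*⟩ − ⟨d^D_w, q − Q*⟩. -/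

import Mathlib

open MeasureTheory ProbabilityTheory Filter Set

noncomputable section

variable {S A : Type*} [MeasurableSpace S] [MeasurableSpace A]

/-- One transition step of the MDP at the level of state-action laws:
from `(s,a) ~ ρ`, draw `s' ~ P(·|s,a)` and `a' ~ κ(·|s')`. -/
def mdpStep (P : Kernel (S × A) S) (κ : Kernel S A) (ρ : Measure (S × A)) :
    Measure (S × A) :=
  ρ.bind fun sa => (P sa).bind fun s' => (κ s').map fun a' => (s', a')

/-- Initial state-action law: `s ~ μ`, `a ~ κ(·|s)`. -/
def mdpInit (κ : Kernel S A) (μ : Measure S) : Measure (S × A) :=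
  μ.bind fun s => (κ s).map fun a => (s, a)

/-- Law of `(s_i, a_i)` for the (possibly non-stationary) policy `π` started at `μ0`. -/
def saLaw (P : Kernel (S × A) S) (π : ℕ → Kernel S A) (μ0 : Measure S) :
    ℕ → Measure (S × A)
  | 0 => mdpInit (π 0) μ0
  | i + 1 => mdpStep P (π (i + 1)) (saLaw P π μ0 i)

/-- Expected discounted return `J_π`. -/
def retJ (P : Kernel (S × A) S) (π : ℕ → Kernel S A) (μ0 : Measure S) (γ : ℝ)
    (R : S × A → ℝ) : ℝ :=
  ∑' i : ℕ, γ ^ i * ∫ sa, R sa ∂(saLaw P π μ0 i)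

/-- Law of `(s_i, a_i)` started from a state-action measure `ρ` at step 0. -/
def saLawFrom (P : Kernel (S × A) S) (π : ℕ → Kernel S A) (ρ : Measure (S × A)) :
    ℕ → Measure (S × A)
  | 0 => ρ
  | i + 1 => mdpStep P (π (i + 1)) (saLawFrom P π ρ i)

/-- State-action value function `Q_π(s, a)`. -/
def Qval (P : Kernel (S × A) S) (π : ℕ → Kernel S A) (γ : ℝ) (R : S × A → ℝ)
    (sa : S × A) : ℝ :=
  ∑' i : ℕ, γ ^ i * ∫ x, R x ∂(saLawFrom P π (Measure.dirac sa) i)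

/-- State value function `V_π(s)`. -/
def Vval (P : Kernel (S × A) S) (π : ℕ → Kernel S A) (γ : ℝ) (R : S × A → ℝ)
    (s : S) : ℝ :=
  retJ P π (Measure.dirac s) γ R

/-- Discounted state occupancy measure `μ_π = (1-γ) ∑ γ^i μ_{π,i}`. -/
def stateOcc (P : Kernel (S × A) S) (π : ℕ → Kernel S A) (μ0 : Measure S) (γ : ℝ) :
    Measure S :=
  ENNReal.ofReal (1 - γ) •
    Measure.sum fun i => ENNReal.ofReal (γ ^ i) • (saLaw P π μ0 i).map Prod.fst

/-- `sup_{a'} q(s', a')`. -/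
def qmax (q : S × A → ℝ) (s' : S) : ℝ := ⨆ a, q (s', a)

/-- Law of one dataset tuple `((s, a), s')` with `(s, a) ~ d^D` and `s' ~ P(·|s,a)`
(the reward `r = R(s,a)` is a deterministic function of `(s,a)`). -/
def sampleLaw (P : Kernel (S × A) S) (dD : Measure (S × A)) : Measure ((S × A) × S) :=
  dD.compProd P

/-- Law of a dataset of `N` i.i.d. tuples. -/
def dataLaw (N : ℕ) (P : Kernel (S × A) S) [IsMarkovKernel P]
    (dD : Measure (S × A)) [IsProbabilityMeasure dD] :
    Measure (Fin N → (S × A) × S) :=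
  Measure.pi fun _ => sampleLaw P dD

/-- The TD-type term inside the losses. -/
def lossTerm (γ : ℝ) (R : S × A → ℝ) (q w : S × A → ℝ) (x : (S × A) × S) : ℝ :=
  w x.1 * (γ * qmax q x.2 + R x.1 - q x.1)

/-- Empirical loss `L̂(d, q, w)` evaluated on the dataset `ω`. -/
def empLoss (N : ℕ) (γ : ℝ) (R : S × A → ℝ) (d : Measure (S × A)) (q w : S × A → ℝ)
    (ω : Fin N → (S × A) × S) : ℝ :=
  0.5 * ∫ sa, (q sa) ^ 2 ∂d + (1 / N) * ∑ i : Fin N, lossTerm γ R q w (ω i)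

/-- Population loss `L(d, q, w)`. -/
def popLoss (P : Kernel (S × A) S) (dD : Measure (S × A)) (γ : ℝ) (R : S × A → ℝ)
    (d : Measure (S × A)) (q w : S × A → ℝ) : ℝ :=
  0.5 * ∫ sa, (q sa) ^ 2 ∂d + ∫ x, lossTerm γ R q w x ∂(sampleLaw P dD)

/-- The statistical error rate `ε_stat`. -/
def epsStat (UW Vmax : ℝ) (nQ nW N : ℕ) (δ : ℝ) : ℝ :=
  UW * Vmax * Real.sqrt (2 * Real.log (2 * nQ * nW / δ) / N)


/-! The quadratic parts of the two losses give the first term exactly, and the reward cancels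
between their TD parts. Because `Q*` is greedy with respect to `π*_e`,
`sup_a' q(s', a') - sup_a' Q*(s', a') ≥ ∫ (q - Q*)(s', a') π*_e(da' | s')` for every `s'`, so the
difference of the TD parts, which are integrals against `d^D_w ⊗ P`, is at least
`γ ⟨P_{π*_e} d^D_w, q - Q*⟩ - ⟨d^D_w, q - Q*⟩`. -/

open Set

namespace MeasureTheory

variable {X Y : Type*} [MeasurableSpace X] [MeasurableSpace Y]

lemma integrable_of_mem_Icc {μ : Measure X} [IsFiniteMeasure μ] {f : X → ℝ} (hf : Measurable f)
    {a b : ℝ} (hab : ∀ x, f x ∈ Icc a b) : Integrable f μ :=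
  .of_bound hf.aestronglyMeasurable (max |a| |b|)
    (ae_of_all _ fun x => abs_le_max_abs_abs (hab x).1 (hab x).2)

lemma integral_mem_Icc {μ : Measure X} [IsProbabilityMeasure μ] {f : X → ℝ} (hf : Measurable f)
    {a b : ℝ} (hab : ∀ x, f x ∈ Icc a b) : ∫ x, f x ∂μ ∈ Icc a b := by
  have hfi : Integrable f μ := integrable_of_mem_Icc hf hab
  constructor
  · simpa using integral_mono (integrable_const a) hfi fun x => (hab x).1
  · simpa using integral_mono hfi (integrable_const b) fun x => (hab x).2

lemma integral_le_iSup {μ : Measure X} [IsProbabilityMeasure μ] {f : X → ℝ} (hf : Integrable f μ)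
    (hbdd : BddAbove (range f)) : ∫ x, f x ∂μ ≤ ⨆ x, f x := by
  simpa using integral_mono hf (integrable_const _) (le_ciSup hbdd)

lemma integral_withDensity_ofReal {μ : Measure X} {w : X → ℝ} (hw : Measurable w)
    (hw0 : ∀ x, 0 ≤ w x) (g : X → ℝ) :
    ∫ x, g x ∂μ.withDensity (fun x => ENNReal.ofReal (w x)) = ∫ x, w x * g x ∂μ := by
  rw [integral_withDensity_eq_integral_toReal_smul hw.ennreal_ofReal
    (ae_of_all _ fun _ => ENNReal.ofReal_lt_top)]
  simp only [ENNReal.toReal_ofReal (hw0 _), smul_eq_mul]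

namespace Measure

lemma withDensity_compProd_left {μ : Measure X} [SFinite μ] {κ : Kernel X Y}
    [IsSFiniteKernel κ] {f : X → ENNReal} (hf : Measurable f) :
    μ.withDensity f ⊗ₘ κ = (μ ⊗ₘ κ).withDensity (fun p => f p.1) := by
  ext s hs
  have hslice (a : X) :
      ∫⁻ b, s.indicator (fun p => f p.1) (a, b) ∂κ a = f a * κ a (Prod.mk a ⁻¹' s) := by
    rw [← lintegral_indicator_const (measurable_prodMk_left hs)]
    rfl
  rw [Measure.compProd_apply hs, withDensity_apply _ hs, ← lintegral_indicator hs,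
    Measure.lintegral_compProd (f := s.indicator fun p => f p.1)
      ((hf.comp measurable_fst).indicator hs),
    lintegral_withDensity_eq_lintegral_mul _ hf (Kernel.measurable_kernel_prodMk_left hs)]
  simp only [hslice, Pi.mul_apply]

lemma integral_bind {μ : Measure X} [SFinite μ] {κ : Kernel X Y} [IsSFiniteKernel κ]
    {f : Y → ℝ} (hf : Integrable f (κ ∘ₘ μ)) :
    ∫ y, f y ∂(κ ∘ₘ μ) = ∫ x, ∫ y, f y ∂κ x ∂μ := by
  rw [← Measure.snd_compProd, Measure.snd, integral_map measurable_snd.aemeasurable]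
  · exact Measure.integral_compProd ((Measure.integrable_compProd_snd_iff hf.1).2 hf)
  · rw [← Measure.snd, Measure.snd_compProd]
    exact hf.1

lemma integral_fst_compProd {μ : Measure X} [SFinite μ] {κ : Kernel X Y} [IsMarkovKernel κ]
    {f : X → ℝ} (hf : AEStronglyMeasurable f μ) : ∫ p, f p.1 ∂(μ ⊗ₘ κ) = ∫ x, f x ∂μ := by
  rw [← integral_map measurable_fst.aemeasurable (by rwa [← Measure.fst, Measure.fst_compProd]),
    ← Measure.fst, Measure.fst_compProd]

lemma integral_snd_compProd {μ : Measure X} [SFinite μ] {κ : Kernel X Y}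
    [IsSFiniteKernel κ] {f : Y → ℝ} (hf : AEStronglyMeasurable f (κ ∘ₘ μ)) :
    ∫ p, f p.2 ∂(μ ⊗ₘ κ) = ∫ y, f y ∂(κ ∘ₘ μ) := by
  rw [← integral_map measurable_snd.aemeasurable (by rwa [← Measure.snd, Measure.snd_compProd]),
    ← Measure.snd, Measure.snd_compProd]

end Measure

end MeasureTheory

lemma mdpStep_eq_comp (P : Kernel (S × A) S) (κ : Kernel S A) [IsSFiniteKernel κ]
    (ρ : Measure (S × A)) : mdpStep P κ ρ = (Kernel.id ×ₖ κ) ∘ₘ (P ∘ₘ ρ) := by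
  rw [Measure.comp_assoc]
  refine congrArg ρ.bind (funext fun sa => ?_)
  rw [Kernel.comp_apply]
  refine congrArg (P sa).bind (funext fun s' => ?_)
  rw [Kernel.prod_apply, Kernel.id_apply, Measure.dirac_prod]

lemma integral_mdpStep (P : Kernel (S × A) S) [IsFiniteKernel P] (κ : Kernel S A)
    [IsMarkovKernel κ] (ρ : Measure (S × A)) [IsFiniteMeasure ρ] {f : S × A → ℝ}
    (hf : Measurable f) {a b : ℝ} (hab : ∀ sa, f sa ∈ Icc a b) :
    ∫ sa, f sa ∂mdpStep P κ ρ = ∫ s, ∫ a', f (s, a') ∂κ s ∂(P ∘ₘ ρ) := by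
  rw [mdpStep_eq_comp, Measure.integral_bind (integrable_of_mem_Icc hf hab)]
  refine integral_congr_ae (ae_of_all _ fun s => ?_)
  dsimp only
  rw [Kernel.prod_apply, Kernel.id_apply, Measure.dirac_prod,
    integral_map measurable_prodMk_left.aemeasurable hf.aestronglyMeasurable]

lemma measurable_saLawFrom_dirac (P : Kernel (S × A) S) (π : ℕ → Kernel S A)
    [∀ i, IsSFiniteKernel (π i)] (i : ℕ) :
    Measurable fun sa : S × A => saLawFrom P π (Measure.dirac sa) i := by
  induction i with
  | zero => exact Measure.measurable_dirac
  | succ i ih =>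
    simp only [saLawFrom, mdpStep_eq_comp]
    exact (Measure.measurable_bind' (Kernel.id ×ₖ π (i + 1)).measurable).comp
      ((Measure.measurable_bind' P.measurable).comp ih)

lemma measurable_Qval (P : Kernel (S × A) S) (π : ℕ → Kernel S A) [∀ i, IsSFiniteKernel (π i)]
    (γ : ℝ) {R : S × A → ℝ} (hR : Measurable R) : Measurable (Qval P π γ R) :=
  Measurable.tsum fun i => measurable_const.mul
    (hR.stronglyMeasurable.integral_kernel (κ := ⟨_, measurable_saLawFrom_dirac P π i⟩)).measurable

omit [MeasurableSpace S] [MeasurableSpace A] in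
lemma qmax_mem_Icc {g : S × A → ℝ} {V : ℝ} (hV : 0 ≤ V) (hg : ∀ sa, g sa ∈ Icc 0 V) (s : S) :
    qmax g s ∈ Icc 0 V :=
  ⟨Real.iSup_nonneg fun _ => (hg _).1, Real.iSup_le (fun _ => (hg _).2) hV⟩

def tdError (γ : ℝ) (R : S × A → ℝ) (g : S × A → ℝ) (x : (S × A) × S) : ℝ :=
  γ * qmax g x.2 + R x.1 - g x.1

lemma integral_lossTerm_sampleLaw (P : Kernel (S × A) S) [IsSFiniteKernel P]
    (dD : Measure (S × A)) [SFinite dD] (γ : ℝ) (R : S × A → ℝ) {w : S × A → ℝ}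
    (hw : Measurable w) (hw0 : ∀ sa, 0 ≤ w sa) (g : S × A → ℝ) :
    ∫ x, lossTerm γ R g w x ∂sampleLaw P dD =
      ∫ x, tdError γ R g x ∂(dD.withDensity (fun sa => ENNReal.ofReal (w sa)) ⊗ₘ P) := by
  rw [Measure.withDensity_compProd_left hw.ennreal_ofReal,
    integral_withDensity_ofReal (w := fun x : (S × A) × S => w x.1) (hw.comp measurable_fst)
      fun x => hw0 x.1]
  rfl

lemma integrable_tdError {ν : Measure ((S × A) × S)} [IsFiniteMeasure ν] (γ : ℝ)
    {R : S × A → ℝ} {Rmax : ℝ} (hR : Measurable R) (hRr : ∀ sa, R sa ∈ Icc 0 Rmax)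
    {g : S × A → ℝ} {V : ℝ} (hV : 0 ≤ V) (hg : Measurable g) (hgV : ∀ sa, g sa ∈ Icc 0 V)
    (hgmax : Measurable (qmax g)) : Integrable (tdError γ R g) ν :=
  (((integrable_of_mem_Icc (hgmax.comp measurable_snd) fun x => qmax_mem_Icc hV hgV x.2).const_mul
    γ).add (integrable_of_mem_Icc (hR.comp measurable_fst) fun x => hRr x.1)).sub
    (integrable_of_mem_Icc (hg.comp measurable_fst) fun x => hgV x.1)

lemma sub_le_tdError_sub_tdError {κ : Kernel S A} [IsMarkovKernel κ] {γ : ℝ} (hγ : 0 ≤ γ)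
    (R : S × A → ℝ) {q Q : S × A → ℝ} {V : ℝ} (hq : Measurable q) (hqV : ∀ sa, q sa ∈ Icc 0 V)
    (hQ : Measurable Q) (hQV : ∀ sa, Q sa ∈ Icc 0 V) (hQmax : ∀ s, qmax Q s = ∫ a, Q (s, a) ∂κ s)
    (x : (S × A) × S) :
    γ * ∫ a, (q (x.2, a) - Q (x.2, a)) ∂κ x.2 - (q x.1 - Q x.1) ≤
      tdError γ R q x - tdError γ R Q x := by
  have hq_int : Integrable (fun a => q (x.2, a)) (κ x.2) :=
    integrable_of_mem_Icc (hq.comp measurable_prodMk_left) fun _ => hqV _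
  have hQ_int : Integrable (fun a => Q (x.2, a)) (κ x.2) :=
    integrable_of_mem_Icc (hQ.comp measurable_prodMk_left) fun _ => hQV _
  have hq_le : ∫ a, q (x.2, a) ∂κ x.2 ≤ qmax q x.2 :=
    integral_le_iSup hq_int ⟨V, forall_mem_range.2 fun _ => (hqV _).2⟩
  rw [integral_sub hq_int hQ_int, ← hQmax]
  have := mul_le_mul_of_nonneg_left hq_le hγ
  simp only [tdError]
  linarith

theorem le_integral_tdError_sub_integral_tdError (P : Kernel (S × A) S) [IsMarkovKernel P]
    (κ : Kernel S A) [IsMarkovKernel κ] (ρ : Measure (S × A)) [IsFiniteMeasure ρ] {γ : ℝ}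
    (hγ : 0 ≤ γ) {R : S × A → ℝ} {Rmax : ℝ} (hR : Measurable R) (hRr : ∀ sa, R sa ∈ Icc 0 Rmax)
    {q Q : S × A → ℝ} {V : ℝ} (hV : 0 ≤ V) (hq : Measurable q) (hqV : ∀ sa, q sa ∈ Icc 0 V)
    (hqmax : Measurable (qmax q)) (hQ : Measurable Q) (hQV : ∀ sa, Q sa ∈ Icc 0 V)
    (hQmax : ∀ s, qmax Q s = ∫ a, Q (s, a) ∂κ s) :
    γ * ∫ sa, (q sa - Q sa) ∂mdpStep P κ ρ - ∫ sa, (q sa - Q sa) ∂ρ ≤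
      ∫ x, tdError γ R q x ∂(ρ ⊗ₘ P) - ∫ x, tdError γ R Q x ∂(ρ ⊗ₘ P) := by
  set f : S × A → ℝ := fun sa => q sa - Q sa
  have hf : Measurable f := hq.sub hQ
  have hfV (sa : S × A) : f sa ∈ Icc (-V) V :=
    ⟨by linarith [(hqV sa).1, (hQV sa).2], by linarith [(hqV sa).2, (hQV sa).1]⟩
  have hnext : Measurable fun s => ∫ a, f (s, a) ∂κ s :=
    hf.stronglyMeasurable.integral_kernel_prod_right'.measurable
  have hnextV (s : S) : ∫ a, f (s, a) ∂κ s ∈ Icc (-V) V :=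
    integral_mem_Icc (hf.comp measurable_prodMk_left) fun _ => hfV _
  have hnext_int : Integrable (fun x : (S × A) × S => γ * ∫ a, f (x.2, a) ∂κ x.2) (ρ ⊗ₘ P) :=
    (integrable_of_mem_Icc (hnext.comp measurable_snd) fun x => hnextV x.2).const_mul γ
  have hQmax_meas : Measurable (qmax Q) := by
    rw [funext hQmax]
    exact hQ.stronglyMeasurable.integral_kernel_prod_right'.measurable
  have htd_q := integrable_tdError (ν := ρ ⊗ₘ P) γ hR hRr hV hq hqV hqmax
  have htd_Q := integrable_tdError (ν := ρ ⊗ₘ P) γ hR hRr hV hQ hQV hQmax_meas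
  have hcur_int : Integrable (fun x : (S × A) × S => f x.1) (ρ ⊗ₘ P) :=
    integrable_of_mem_Icc (hf.comp measurable_fst) fun x => hfV x.1
  calc γ * ∫ sa, f sa ∂mdpStep P κ ρ - ∫ sa, f sa ∂ρ
      = ∫ x, (γ * ∫ a, f (x.2, a) ∂κ x.2 - f x.1) ∂(ρ ⊗ₘ P) := by
        rw [integral_sub hnext_int hcur_int, integral_const_mul,
          Measure.integral_snd_compProd hnext.aestronglyMeasurable,
          Measure.integral_fst_compProd hf.aestronglyMeasurable, integral_mdpStep P κ ρ hf hfV]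
    _ ≤ ∫ x, (tdError γ R q x - tdError γ R Q x) ∂(ρ ⊗ₘ P) :=
        integral_mono (hnext_int.sub hcur_int) (htd_q.sub htd_Q)
          (sub_le_tdError_sub_tdError hγ R hq hqV hQ hQV hQmax)
    _ = _ := integral_sub htd_q htd_Q

theorem population_loss_strong_convexity_general
    (P : Kernel (S × A) S) [IsMarkovKernel P]
    (πe : Kernel S A) [IsMarkovKernel πe]
    (γ : ℝ) (hγ : γ ∈ Set.Ioo (0 : ℝ) 1)
    (Rmax : ℝ) (R : S × A → ℝ) (hRmeas : Measurable R)
    (hRrange : ∀ sa, R sa ∈ Set.Icc 0 Rmax)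
    -- `sup_a Q*(s, a) = Q*(s, π*_e)`
    (hsup : ∀ s : S, qmax (Qval P (fun _ => πe) γ R) s =
      ∫ a, Qval P (fun _ => πe) γ R (s, a) ∂(πe s))
    -- `Q* ∈ [0, V_max]`
    (Vmax : ℝ) (hQstar : ∀ sa, Qval P (fun _ => πe) γ R sa ∈ Set.Icc 0 Vmax)
    -- data distribution
    (dD : Measure (S × A)) [IsProbabilityMeasure dD]
    -- the measure `d`, the weight `w`, and the test function `q`
    (d : Measure (S × A)) [IsProbabilityMeasure d]
    (w : S × A → ℝ) (hwmeas : Measurable w) (hw0 : ∀ x, 0 ≤ w x)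
    (Cw : ℝ) (hwb : ∀ x, w x ≤ Cw)
    (q : S × A → ℝ) (hqmeas : Measurable q) (hqr : ∀ sa, q sa ∈ Set.Icc 0 Vmax)
    (hqmax : Measurable (qmax q)) :
    popLoss P dD γ R d q w - popLoss P dD γ R d (Qval P (fun _ => πe) γ R) w ≥
      0.5 * ∫ sa, ((q sa) ^ 2 - (Qval P (fun _ => πe) γ R sa) ^ 2) ∂d
      + γ * ∫ sa, (q sa - Qval P (fun _ => πe) γ R sa)
          ∂(mdpStep P πe (dD.withDensity fun x => ENNReal.ofReal (w x)))
      - ∫ sa, (q sa - Qval P (fun _ => πe) γ R sa)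
          ∂(dD.withDensity fun x => ENNReal.ofReal (w x)) := by
  set Q := Qval P (fun _ => πe) γ R
  obtain ⟨x₀⟩ := nonempty_of_isProbabilityMeasure dD
  have hV : 0 ≤ Vmax := (hQstar x₀).1.trans (hQstar x₀).2
  have hQ : Measurable Q := measurable_Qval P _ γ hRmeas
  set ρw := dD.withDensity fun x => ENNReal.ofReal (w x)
  have : IsFiniteMeasure ρw :=
    isFiniteMeasure_withDensity_ofReal (integrable_of_mem_Icc hwmeas fun x => ⟨hw0 x, hwb x⟩).2
  have hsq_int {g : S × A → ℝ} (hg : Measurable g) (hgV : ∀ sa, g sa ∈ Icc 0 Vmax) :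
      Integrable (fun sa => g sa ^ 2) d :=
    integrable_of_mem_Icc (hg.pow_const 2) fun sa =>
      ⟨sq_nonneg _, pow_le_pow_left₀ (hgV sa).1 (hgV sa).2 2⟩
  have hlin := le_integral_tdError_sub_integral_tdError P πe ρw hγ.1.le hRmeas hRrange hV
    hqmeas hqr hqmax hQ hQstar hsup
  simp only [popLoss, integral_lossTerm_sampleLaw P dD γ R hwmeas hw0,
    integral_sub (hsq_int hqmeas hqr) (hsq_int hQ hQstar)]
  linarith

/-- **Strong convexity lower bound for the population loss at `Q*`**. -/
theorem population_loss_strong_convexity [Nonempty A]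
    (P : Kernel (S × A) S) [IsMarkovKernel P]
    (πe : Kernel S A) [IsMarkovKernel πe]
    (μ0 : Measure S) [IsProbabilityMeasure μ0]
    (γ : ℝ) (hγ : γ ∈ Set.Ioo (0 : ℝ) 1)
    (Rmax : ℝ) (R : S × A → ℝ) (hRmeas : Measurable R)
    (hRrange : ∀ sa, R sa ∈ Set.Icc 0 Rmax)
    -- `π*_e` is optimal almost everywhere (over all non-stationary policies)
    (hopt : ∀ s : S, Vval P (fun _ => πe) γ R s =
      ⨆ π : {π : ℕ → Kernel S A // ∀ i, IsMarkovKernel (π i)}, Vval P π.1 γ R s)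
    -- Bellman optimality equation for `Q* = Q_{π*_e}`
    (hBellman : ∀ sa : S × A, Qval P (fun _ => πe) γ R sa =
      R sa + γ * ∫ s', qmax (Qval P (fun _ => πe) γ R) s' ∂(P sa))
    -- `sup_a Q*(s, a) = Q*(s, π*_e)`
    (hsup : ∀ s : S, qmax (Qval P (fun _ => πe) γ R) s =
      ∫ a, Qval P (fun _ => πe) γ R (s, a) ∂(πe s))
    -- `Q* ∈ [0, V_max]`
    (Vmax : ℝ) (hQstar : ∀ sa, Qval P (fun _ => πe) γ R sa ∈ Set.Icc 0 Vmax)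
    -- data distribution
    (dD : Measure (S × A)) [IsProbabilityMeasure dD]
    -- the measure `d`, the weight `w`, and the test function `q`
    (d : Measure (S × A)) [IsProbabilityMeasure d]
    (w : S × A → ℝ) (hwmeas : Measurable w) (hw0 : ∀ x, 0 ≤ w x)
    (Cw : ℝ) (hwb : ∀ x, w x ≤ Cw)
    (q : S × A → ℝ) (hqmeas : Measurable q) (hqr : ∀ sa, q sa ∈ Set.Icc 0 Vmax)
    (hqmax : Measurable (qmax q)) :
    popLoss P dD γ R d q w - popLoss P dD γ R d (Qval P (fun _ => πe) γ R) w ≥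
      0.5 * ∫ sa, ((q sa) ^ 2 - (Qval P (fun _ => πe) γ R sa) ^ 2) ∂d
      + γ * ∫ sa, (q sa - Qval P (fun _ => πe) γ R sa)
          ∂(mdpStep P πe (dD.withDensity fun x => ENNReal.ofReal (w x)))
      - ∫ sa, (q sa - Qval P (fun _ => πe) γ R sa)
          ∂(dD.withDensity fun x => ENNReal.ofReal (w x)) :=
  population_loss_strong_convexity_general P πe γ hγ Rmax R hRmeas hRrange hsup Vmax hQstar dD d w
    hwmeas hw0 Cw hwb q hqmeas hqr hqmax
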